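/- For every real β with 1 < β ≤ 2, every integer M ≥ 2 and every integer i with 1 ≤ i ≤ M − 1, one has − Σ_{k=i−M, k≠0}^{i} g_k^{(β)} ≤ g_0^{(β)}, where the sum ranges over all integers k with i − M ≤ k ≤ i and k ≠ 0. -/

import Mathlib

/-- The fractional centred difference coefficients
`g_k^{(β)} = (−1)^k Γ(β+1) / (Γ(β/2 − k + 1) Γ(β/2 + k + 1))`. -/
noncomputable def g (β : ℝ) (k : ℤ) : ℝ :=
  (-1 : ℝ) ^ k * Real.Gamma (β + 1) /
    (Real.Gamma (β / 2 - k + 1) * Real.Gamma (β / 2 + k + 1))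

/-- Auxiliary "antiderivative" sequence for telescoping. -/
noncomputable def Aaux (β : ℝ) (k : ℤ) : ℝ :=
  (-1 : ℝ) ^ k * Real.Gamma β /
    (Real.Gamma (β / 2 - k) * Real.Gamma (β / 2 + k + 1))

lemma gamma_sign (n : ℕ) :
    ∀ x : ℝ, -(n:ℝ) < x → x < -(n:ℝ) + 1 → 0 < (-1:ℝ)^n * Real.Gamma x := by
  induction n with
  | zero => intro x h1 h2; simpa using Real.Gamma_pos_of_pos (by simpa using h1)
  | succ n ih =>
    intro x h1 h2
    have hn : (0:ℝ) ≤ n := Nat.cast_nonneg n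
    push_cast at h1 h2
    have hx0 : x < 0 := by linarith
    have h := ih (x+1) (by linarith) (by linarith)
    rw [Real.Gamma_add_one (by linarith : x ≠ 0)] at h
    rw [pow_succ]
    nlinarith

lemma neg_one_zpow_add_two_mul (i t : ℤ) : (-1:ℝ)^(i + 2*t) = (-1:ℝ)^i := by
  rw [zpow_add₀ (by norm_num : (-1:ℝ) ≠ 0), zpow_mul]; norm_num

lemma neg_one_pow_sq (n : ℕ) : (-1:ℝ)^n * (-1:ℝ)^n = 1 := by
  rw [← pow_add, show n + n = 2*n from by ring, pow_mul]; norm_num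

lemma tel (f : ℤ → ℝ) (a : ℤ) :
    ∀ b, a ≤ b → ∑ k ∈ Finset.Icc a b, (f k - f (k-1)) = f b - f (a-1) := by
  refine Int.le_induction ?_ ?_
  · simp
  · intro b hb ih
    have hins : Finset.Icc a (b+1) = insert (b+1) (Finset.Icc a b) := by
      ext x; simp [Finset.mem_Icc]; omega
    rw [hins, Finset.sum_insert (by simp), ih]
    have h1 : b + 1 - 1 = b := by ring
    rw [h1]; ring

lemma signed_div (s X u v : ℝ) (hs : s * s = 1) (hu : u ≠ 0) (hv : v ≠ 0) :
    s * X / (u * v) = X / (u * (s * v)) := by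
  have hs0 : s ≠ 0 := by intro h; rw [h] at hs; norm_num at hs
  field_simp
  linear_combination X * hs

lemma signed_div' (s X u v : ℝ) (hs : s * s = 1) (hu : u ≠ 0) (hv : v ≠ 0) :
    s * X / (u * v) = X / ((s * u) * v) := by
  rw [show u * v = v * u from by ring, signed_div s X v u hs hv hu]; ring_nf

lemma key_frac (s G a b X Y : ℝ) (ha : a ≠ 0) (hb : b ≠ 0) (hX : X ≠ 0) (hY : Y ≠ 0) :
    s * ((a+b) * G) / ((a*X)*(b*Y)) = s * G / (X*(b*Y)) - -s * G/((a*X)*Y) := by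
  field_simp
  ring

lemma half_add_int_ne (β : ℝ) (hβ1 : 1 < β) (hβ2 : β < 2) (z : ℤ) : β/2 + z ≠ 0 := by
  intro h
  have h1 : (0:ℝ) < (-z : ℤ) := by push_cast; linarith
  have h2 : ((-z:ℤ):ℝ) < 1 := by push_cast; linarith
  have h3 : (0:ℤ) < -z := by exact_mod_cast h1
  have h4 : (1:ℤ) ≤ -z := h3
  have : (1:ℝ) ≤ ((-z:ℤ):ℝ) := by exact_mod_cast h4
  linarith

lemma gamma_half_ne (β : ℝ) (hβ1 : 1 < β) (hβ2 : β < 2) (z : ℤ) :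
    Real.Gamma (β/2 + z) ≠ 0 := by
  apply Real.Gamma_ne_zero
  intro m h
  apply half_add_int_ne β hβ1 hβ2 (z + m)
  push_cast
  linarith

lemma g_eq (β : ℝ) (hβ1 : 1 < β) (hβ2 : β < 2) (k : ℤ) :
    g β k = Aaux β k - Aaux β (k-1) := by
  have hβ0 : β ≠ 0 := by linarith
  have hx : β/2 - k ≠ 0 := by
    have h := half_add_int_ne β hβ1 hβ2 (-k); push_cast at h
    intro h'; apply h; linarith
  have hy : β/2 + k ≠ 0 := half_add_int_ne β hβ1 hβ2 k
  have gx : Real.Gamma (β/2 - k) ≠ 0 := by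
    have h := gamma_half_ne β hβ1 hβ2 (-k); push_cast at h
    first
    | exact h
    | (convert h using 2; ring)
  have gy : Real.Gamma (β/2 + k) ≠ 0 := gamma_half_ne β hβ1 hβ2 k
  have e1 : Real.Gamma (β+1) = β * Real.Gamma β := Real.Gamma_add_one hβ0
  have e2 : Real.Gamma (β/2 - k + 1) = (β/2 - k) * Real.Gamma (β/2 - k) :=
    Real.Gamma_add_one hx
  have e3 : Real.Gamma (β/2 + k + 1) = (β/2 + k) * Real.Gamma (β/2 + k) :=
    Real.Gamma_add_one hy
  have es : (-1:ℝ)^(k-1) = -(-1:ℝ)^k := by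
    have h := neg_one_zpow_add_two_mul (k-1) 1
    rw [show k - 1 + 2*1 = k + 1 from by ring] at h
    rw [← h, zpow_add₀ (by norm_num : (-1:ℝ) ≠ 0), zpow_one]; ring
  have h := key_frac ((-1:ℝ)^k) (Real.Gamma β) (β/2 - (k:ℝ)) (β/2 + (k:ℝ))
    (Real.Gamma (β/2 - k)) (Real.Gamma (β/2 + k)) hx hy gx gy
  rw [show (β/2 - (k:ℝ)) + (β/2 + (k:ℝ)) = β from by ring] at h
  unfold g Aaux
  push_cast
  rw [e1, e2, e3, es,
    show β/2 - ((k:ℝ) - 1) = β/2 - k + 1 from by ring,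
    show β/2 + ((k:ℝ) - 1) + 1 = β/2 + k from by ring, e2]
  exact h

lemma Aaux_pos (β : ℝ) (hβ1 : 1 < β) (hβ2 : β < 2) (i : ℤ) (hi : 0 ≤ i) :
    0 < Aaux β i := by
  obtain ⟨n, rfl⟩ : ∃ n : ℕ, i = (n : ℤ) := ⟨i.toNat, (Int.toNat_of_nonneg hi).symm⟩
  have hs1 : 0 < (-1:ℝ)^n * Real.Gamma (β/2 - (n:ℝ)) := by
    apply gamma_sign n <;> push_cast <;> linarith
  have hv : 0 < Real.Gamma (β/2 + (n:ℝ) + 1) := by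
    apply Real.Gamma_pos_of_pos; positivity
  have hu : Real.Gamma (β/2 - (n:ℝ)) ≠ 0 := by
    intro h; rw [h] at hs1; simp at hs1
  have hΓβ : 0 < Real.Gamma β := Real.Gamma_pos_of_pos (by linarith)
  unfold Aaux
  rw [zpow_natCast]
  push_cast
  rw [signed_div' ((-1:ℝ)^n) (Real.Gamma β) (Real.Gamma (β/2 - (n:ℝ)))
    (Real.Gamma (β/2 + (n:ℝ) + 1)) (neg_one_pow_sq n) hu (ne_of_gt hv)]
  exact div_pos hΓβ (mul_pos hs1 hv)

lemma Aaux_neg (β : ℝ) (hβ1 : 1 < β) (hβ2 : β < 2) (j : ℤ) (hj : j ≤ -2) :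
    Aaux β j < 0 := by
  obtain ⟨m, hm⟩ : ∃ m : ℕ, j = -(m:ℤ) - 2 := ⟨(-j-2).toNat, by omega⟩
  subst hm
  have hsign : (-1:ℝ)^(-(m:ℤ)-2) = (-1:ℝ)^m := by
    have h := neg_one_zpow_add_two_mul (-(m:ℤ)-2) ((m:ℤ)+2)
    rw [show -(m:ℤ) - 2 + 2*((m:ℤ)+2) = (m:ℤ) + 2 from by ring] at h
    rw [← h, show ((m:ℤ)+2) = ((m+2:ℕ):ℤ) from by push_cast; ring, zpow_natCast, pow_add]
    norm_num
  have hu : 0 < Real.Gamma (β/2 - (-(m:ℝ) - 2)) := by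
    apply Real.Gamma_pos_of_pos
    have : (0:ℝ) ≤ m := Nat.cast_nonneg m
    linarith
  have hv : (-1:ℝ)^m * Real.Gamma (β/2 + (-(m:ℝ)-2) + 1) < 0 := by
    have h := gamma_sign (m+1) (β/2 + (-(m:ℝ)-2) + 1)
      (by push_cast; linarith) (by push_cast; linarith)
    rw [pow_succ] at h
    nlinarith
  have hvne : Real.Gamma (β/2 + (-(m:ℝ)-2) + 1) ≠ 0 := by
    intro h; rw [h] at hv; simp at hv
  have hΓβ : 0 < Real.Gamma β := Real.Gamma_pos_of_pos (by linarith)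
  unfold Aaux
  rw [hsign]
  push_cast
  rw [signed_div ((-1:ℝ)^m) (Real.Gamma β) (Real.Gamma (β/2 - (-(m:ℝ) - 2)))
    (Real.Gamma (β/2 + (-(m:ℝ)-2) + 1)) (neg_one_pow_sq m) (ne_of_gt hu) hvne]
  exact div_neg_of_pos_of_neg hΓβ (mul_neg_of_pos_of_neg hu hv)

lemma g_two_eq_zero (k : ℤ) (hk : k ≠ -1 ∧ k ≠ 0 ∧ k ≠ 1) : g 2 k = 0 := by
  unfold g
  rcases le_or_gt 2 k with h | h
  · obtain ⟨m, hm⟩ : ∃ m : ℕ, ((2:ℝ)/2 - k + 1) = -(m:ℝ) := by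
      refine ⟨(k-2).toNat, ?_⟩
      have h1 : ((k-2).toNat : ℤ) = k - 2 := Int.toNat_of_nonneg (by omega)
      have h2 : (((k-2).toNat : ℤ) : ℝ) = ((k:ℝ) - 2) := by rw [h1]; push_cast; ring
      push_cast at h2 ⊢
      linarith
    rw [hm, Real.Gamma_neg_nat_eq_zero]
    simp
  · have h2 : k ≤ -2 := by omega
    obtain ⟨m, hm⟩ : ∃ m : ℕ, ((2:ℝ)/2 + k + 1) = -(m:ℝ) := by
      refine ⟨(-k-2).toNat, ?_⟩
      have h3 : ((-k-2).toNat : ℤ) = -k - 2 := Int.toNat_of_nonneg (by omega)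
      have h4 : (((-k-2).toNat : ℤ) : ℝ) = (-(k:ℝ) - 2) := by rw [h3]; push_cast; ring
      push_cast at h4 ⊢
      linarith
    rw [hm, Real.Gamma_neg_nat_eq_zero]
    simp

lemma g_two_neg_one : g 2 (-1) = -1 := by unfold g; norm_num

lemma g_two_one : g 2 1 = -1 := by unfold g; norm_num

lemma g_two_zero : g 2 0 = 2 := by unfold g; norm_num

/-- Lemma 2.5: for `2 ≤ M` and `1 ≤ i ≤ M − 1`,
`− Σ_{k=i−M, k≠0}^{i} g_k^{(β)} ≤ g_0^{(β)}`. -/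
theorem neg_sum_g_le_g_zero (β : ℝ) (hβ1 : 1 < β) (hβ2 : β ≤ 2)
    (M : ℕ) (hM : 2 ≤ M) (i : ℤ) (hi1 : 1 ≤ i) (hi2 : i ≤ (M : ℤ) - 1) :
    -(∑ k ∈ (Finset.Icc (i - (M : ℤ)) i).erase 0, g β k) ≤ g β 0 := by
  have h0mem : (0:ℤ) ∈ Finset.Icc (i - (M:ℤ)) i := by
    simp [Finset.mem_Icc]; omega
  have hsum : ∑ k ∈ (Finset.Icc (i - (M:ℤ)) i).erase 0, g β k + g β 0
      = ∑ k ∈ Finset.Icc (i - (M:ℤ)) i, g β k := Finset.sum_erase_add _ _ h0mem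
  rcases lt_or_eq_of_le hβ2 with h2 | h2
  · -- β < 2
    have hkey : 0 ≤ ∑ k ∈ Finset.Icc (i - (M:ℤ)) i, g β k := by
      rw [Finset.sum_congr rfl (fun k _ => g_eq β hβ1 h2 k),
        tel (Aaux β) (i - (M:ℤ)) i (by omega)]
      have hp := Aaux_pos β hβ1 h2 i (by omega)
      have hn := Aaux_neg β hβ1 h2 (i - (M:ℤ) - 1) (by omega)
      linarith
    linarith
  · -- β = 2
    subst h2
    have hsub : ({-1, 1} : Finset ℤ) ⊆ (Finset.Icc (i - (M:ℤ)) i).erase 0 := by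
      intro x hx
      simp [Finset.mem_insert, Finset.mem_erase, Finset.mem_Icc] at hx ⊢
      rcases hx with rfl | rfl <;> omega
    have hS : ∑ k ∈ (Finset.Icc (i - (M:ℤ)) i).erase 0, g 2 k
        = ∑ k ∈ ({-1, 1} : Finset ℤ), g 2 k := by
      refine (Finset.sum_subset hsub ?_).symm
      intro x hx hnx
      simp [Finset.mem_insert, Finset.mem_erase] at hx hnx
      exact g_two_eq_zero x ⟨hnx.1, hx.1, hnx.2⟩
    have hpair : ∑ k ∈ ({-1, 1} : Finset ℤ), g 2 k = -2 := by
      rw [Finset.sum_pair (by norm_num), g_two_neg_one, g_two_one]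
      norm_num
    rw [hS, hpair, g_two_zero]
    norm_num
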